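/- Let m be a positive integer and define c_m := (2/(m+1)) ∑_{1 ≤ j ≤ m, j odd} cot(πj/(2m+2)). For every Borel probability measure μ on ℝ, min_{1 ≤ k ≤ m} E_μ[sin(kx)] ≤ 1/c_m, where E_μ[sin(kx)] := ∫_ℝ sin(kx) dμ(x). -/

import Mathlib

/-!
With `n = m + 1`, let `F(y) = |∑_{r<n} e^{iry}|² / n² ≥ 0` and `θ_j = (2j+1)π/n`. Averaging `F` over
the `n` nodes kills every nonconstant frequency, so `∑_{j<n} F(x - θ_j) = 1`, and therefore
`S(x) = ∑_{j<n/2} (F(x - θ_j) - F(x + θ_j)) ≤ 1`. Expanding, `S(x) = ∑_{k=1}^m b_k sin(kx)` with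
`b_k = 4(n-k)/n² ∑_{j<n/2} sin(kθ_j) ≥ 0`, and the conjugate Fejér sum
`∑_{k<n} (n-k) sin(kθ) = (n/2) cot(θ/2)` (valid since `sin(nθ_j) = 0`) gives `∑ b_k = c_m`.
Integrating `S ≤ 1` against `μ` yields `∑ b_k E_μ[sin(kx)] ≤ 1`, so the smallest
moment is at most `1/c_m`.
-/

open MeasureTheory Real Finset

namespace SineMomentBound

lemma two_mul_sin_half_mul_sum_cos (a d : ℝ) (N : ℕ) :
    2 * sin (d / 2) * ∑ j ∈ range N, cos (a + j * d)
      = sin (a + N * d - d / 2) - sin (a - d / 2) := by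
  induction N with
  | zero => simp
  | succ N ih =>
    rw [sum_range_succ, mul_add, ih]
    have h₁ : a + ((N + 1 : ℕ) : ℝ) * d - d / 2 = (a + N * d) + d / 2 := by push_cast; ring
    have h₂ : a + (N : ℝ) * d - d / 2 = (a + N * d) - d / 2 := by ring
    rw [h₁, h₂, sin_add, sin_sub, sin_sub]
    ring

lemma two_mul_sin_half_mul_sum_sin (a d : ℝ) (N : ℕ) :
    2 * sin (d / 2) * ∑ j ∈ range N, sin (a + j * d)
      = cos (a - d / 2) - cos (a + N * d - d / 2) := by
  induction N with
  | zero => simp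
  | succ N ih =>
    rw [sum_range_succ, mul_add, ih]
    have h₁ : a + ((N + 1 : ℕ) : ℝ) * d - d / 2 = (a + N * d) + d / 2 := by push_cast; ring
    have h₂ : a + (N : ℝ) * d - d / 2 = (a + N * d) - d / 2 := by ring
    rw [h₁, h₂, cos_add, cos_sub, cos_sub]
    ring

lemma sin_mul_sum_sin_odd_mul (α : ℝ) (N : ℕ) :
    sin α * ∑ j ∈ range N, sin ((2 * j + 1) * α) = sin (N * α) ^ 2 := by
  have h := two_mul_sin_half_mul_sum_sin α (2 * α) N
  have h₁ : α - 2 * α / 2 = 0 := by ring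
  have h₂ : α + N * (2 * α) - 2 * α / 2 = 2 * (N * α) := by ring
  rw [h₁, h₂, cos_zero, cos_two_mul, mul_div_cancel_left₀ α two_ne_zero] at h
  have h₃ := sin_sq_add_cos_sq ((N : ℝ) * α)
  simp only [show ∀ j : ℕ, α + j * (2 * α) = (2 * j + 1) * α from fun j => by ring] at h
  linear_combination h / 2 - h₃

lemma sq_sum_cos_add_sq_sum_sin (n : ℕ) (y : ℝ) :
    (∑ r ∈ range n, cos (r * y)) ^ 2 + (∑ r ∈ range n, sin (r * y)) ^ 2
      = 2 * ∑ k ∈ range n, (n - k : ℝ) * cos (k * y) - n := by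
  induction n with
  | zero => simp
  | succ n ih =>
    have hcross :
        (∑ r ∈ range n, cos (r * y)) * cos (n * y) + (∑ r ∈ range n, sin (r * y)) * sin (n * y)
        = ∑ k ∈ range n, cos ((k + 1) * y) := by
      rw [sum_mul, sum_mul, ← sum_add_distrib, ← sum_range_reflect (fun k : ℕ => cos ((k + 1) * y))]
      refine sum_congr rfl fun r hr => ?_
      have hr' := mem_range.mp hr
      rw [← cos_sub, ← cos_neg, Nat.cast_sub (by omega), Nat.cast_pred (by omega)]
      ring_nf
    have hrhs : ∑ k ∈ range (n + 1), ((n + 1 : ℕ) - k : ℝ) * cos (k * y)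
        = ∑ k ∈ range n, (n - k : ℝ) * cos (k * y) + ∑ k ∈ range n, cos ((k + 1) * y) + 1 := by
      push_cast
      simp only [show ∀ k : ℕ, ((n : ℝ) + 1 - k) * cos (k * y) = (n - k) * cos (k * y) + cos (k * y)
        from fun k => by ring, sum_add_distrib]
      rw [sum_range_succ (fun k : ℕ => (n - k : ℝ) * cos (k * y)) n, sum_range_succ']
      push_cast
      simp only [sub_self, zero_mul, add_zero, cos_zero]
      ring
    rw [sum_range_succ, sum_range_succ, hrhs]
    push_cast
    linear_combination ih + 2 * hcross + sin_sq_add_cos_sq ((n : ℝ) * y)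

lemma four_mul_sin_half_sq_mul_sum_sin (n : ℕ) (θ : ℝ) :
    4 * sin (θ / 2) ^ 2 * ∑ k ∈ range n, (n - k : ℝ) * sin (k * θ) = n * sin θ - sin (n * θ) := by
  induction n with
  | zero => simp
  | succ n ih =>
    have hsplit : ∑ k ∈ range (n + 1), ((n + 1 : ℕ) - k : ℝ) * sin (k * θ)
        = ∑ k ∈ range n, (n - k : ℝ) * sin (k * θ) + ∑ k ∈ range (n + 1), sin (k * θ) := by
      push_cast
      simp only [show ∀ k : ℕ, ((n : ℝ) + 1 - k) * sin (k * θ) = (n - k) * sin (k * θ) + sin (k * θ)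
        from fun k => by ring, sum_add_distrib]
      rw [sum_range_succ (fun k : ℕ => (n - k : ℝ) * sin (k * θ)) n, sub_self, zero_mul, add_zero]
    have htel := two_mul_sin_half_mul_sum_sin 0 θ (n + 1)
    simp only [zero_add, zero_sub, cos_neg] at htel
    rw [hsplit, mul_add, ih]
    have e₁ : ((n + 1 : ℕ) : ℝ) * θ - θ / 2 = n * θ + θ / 2 := by push_cast; ring
    have e₂ : ((n + 1 : ℕ) : ℝ) * θ = n * θ + 2 * (θ / 2) := by push_cast; ring
    have hsin : sin θ = 2 * sin (θ / 2) * cos (θ / 2) := by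
      rw [← sin_two_mul, mul_div_cancel₀ θ two_ne_zero]
    rw [e₁, cos_add] at htel
    rw [e₂, sin_add, sin_two_mul, cos_two_mul, hsin]
    push_cast
    linear_combination 2 * sin (θ / 2) * htel + 2 * sin (n * θ) * sin_sq_add_cos_sq (θ / 2)

/-- `|∑_{r<n} e^{iry}|² / n²`, i.e. the Fejér kernel divided by `n`. -/
noncomputable def fejerKernel (n : ℕ) (y : ℝ) : ℝ :=
  ((∑ r ∈ range n, cos (r * y)) ^ 2 + (∑ r ∈ range n, sin (r * y)) ^ 2) / n ^ 2

lemma fejerKernel_nonneg (n : ℕ) (y : ℝ) : 0 ≤ fejerKernel n y := by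
  unfold fejerKernel; positivity

lemma fejerKernel_eq (n : ℕ) (y : ℝ) :
    fejerKernel n y = (2 * ∑ k ∈ range n, (n - k : ℝ) * cos (k * y) - n) / n ^ 2 := by
  rw [fejerKernel, sq_sum_cos_add_sq_sum_sin]

lemma fejerKernel_sub_fejerKernel (n : ℕ) (x t : ℝ) :
    fejerKernel n (x - t) - fejerKernel n (x + t)
      = ∑ k ∈ range n, 4 * (n - k) / n ^ 2 * (sin (k * t) * sin (k * x)) := by
  rw [fejerKernel_eq, fejerKernel_eq, ← sub_div, sub_sub_sub_cancel_right, ← mul_sub,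
    ← sum_sub_distrib, mul_sum, sum_div]
  refine sum_congr rfl fun k _ => ?_
  rw [mul_sub (k : ℝ), mul_add (k : ℝ), cos_sub, cos_add]
  ring

lemma sin_natCast_mul_pi_div_pos {a b : ℕ} (ha : 0 < a) (hab : a < b) : 0 < sin (a * π / b) := by
  have hb : (0 : ℝ) < b := by exact_mod_cast ha.trans hab
  refine sin_pos_of_pos_of_lt_pi (by positivity) ?_
  rw [div_lt_iff₀ hb, mul_comm]
  exact mul_lt_mul_of_pos_left (by exact_mod_cast hab) pi_pos

noncomputable def node (n j : ℕ) : ℝ := (2 * j + 1) * π / n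

lemma sum_cos_mul_sub_node {n k : ℕ} (hk : 0 < k) (hkn : k < n) (x : ℝ) :
    ∑ j ∈ range n, cos (k * (x - node n j)) = 0 := by
  have hn : (0 : ℝ) < n := by exact_mod_cast hk.trans hkn
  have hs : sin (k * π / n) ≠ 0 := (sin_natCast_mul_pi_div_pos hk hkn).ne'
  have htel := two_mul_sin_half_mul_sum_cos (k * x - k * π / n) (-(2 * k * π / n)) n
  have h₁ : k * x - k * π / n - -(2 * k * π / n) / 2 = k * x := by ring
  have h₂ : k * x - k * π / n + n * -(2 * k * π / n) - -(2 * k * π / n) / 2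
      = k * x - (k : ℤ) * (2 * π) := by
    push_cast; field_simp; ring
  have h₃ : -(2 * k * π / n) / 2 = -(k * π / n) := by ring
  rw [h₁, h₂, h₃, sin_sub_int_mul_two_pi, sub_self, sin_neg] at htel
  have : ∀ j : ℕ, k * (x - node n j) = k * x - k * π / n + j * -(2 * k * π / n) := fun j => by
    unfold node; field_simp; ring
  simp only [this]
  simpa [hs] using htel

lemma sum_fejerKernel_sub_node {n : ℕ} (hn : 0 < n) (x : ℝ) :
    ∑ j ∈ range n, fejerKernel n (x - node n j) = 1 := by
  have hn' : (n : ℝ) ≠ 0 := by positivity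
  simp only [fejerKernel_eq, ← sum_div, sum_sub_distrib, ← mul_sum, sum_const, card_range,
    nsmul_eq_mul]
  rw [sum_comm, sum_eq_single_of_mem 0 (mem_range.mpr hn)]
  · simp only [Nat.cast_zero, sub_zero, zero_mul, cos_zero, mul_one, sum_const, card_range,
      nsmul_eq_mul]
    field_simp
    ring
  · intro k hk hk0
    rw [← mul_sum, sum_cos_mul_sub_node (Nat.pos_of_ne_zero hk0) (mem_range.mp hk), mul_zero]

lemma cot_pos_of_pos_of_lt_pi_div_two {x : ℝ} (h₀ : 0 < x) (h₁ : x < π / 2) : 0 < cot x := by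
  rw [cot_eq_cos_div_sin]
  exact div_pos (cos_pos_of_mem_Ioo ⟨by linarith, h₁⟩) (sin_pos_of_pos_of_lt_pi h₀ (by linarith))

lemma node_div_two (n j : ℕ) : node n j / 2 = ((2 * j + 1 : ℕ) : ℝ) * π / ((2 * n : ℕ) : ℝ) := by
  unfold node; push_cast; field_simp

lemma cot_node_div_two_pos {n j : ℕ} (hj : 2 * j + 1 < n) : 0 < cot (node n j / 2) := by
  have hn : (0 : ℝ) < n := by exact_mod_cast Nat.zero_lt_of_lt hj
  have hj' : (2 * j + 1 : ℝ) < n := by exact_mod_cast hj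
  refine cot_pos_of_pos_of_lt_pi_div_two (by unfold node; positivity) ?_
  rw [node, div_div, div_lt_div_iff₀ (by positivity) two_pos]
  nlinarith [pi_pos]

/-- The coefficients of the sine polynomial `∑_{j<n/2} (F(x - θ_j) - F(x + θ_j))`. -/
noncomputable def sineCoeff (n k : ℕ) : ℝ :=
  4 * (n - k) / n ^ 2 * ∑ j ∈ range (n / 2), sin (k * node n j)

lemma sum_sineCoeff_mul_sin (n : ℕ) (x : ℝ) :
    ∑ k ∈ range n, sineCoeff n k * sin (k * x)
      = ∑ j ∈ range (n / 2), (fejerKernel n (x - node n j) - fejerKernel n (x + node n j)) := by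
  simp only [fejerKernel_sub_fejerKernel, sineCoeff, mul_sum, sum_mul]
  rw [sum_comm]
  exact sum_congr rfl fun _ _ => sum_congr rfl fun _ _ => by ring

lemma sum_sineCoeff_mul_sin_le_one {n : ℕ} (hn : 0 < n) (x : ℝ) :
    ∑ k ∈ range n, sineCoeff n k * sin (k * x) ≤ 1 :=
  calc ∑ k ∈ range n, sineCoeff n k * sin (k * x)
      = ∑ j ∈ range (n / 2), (fejerKernel n (x - node n j) - fejerKernel n (x + node n j)) :=
        sum_sineCoeff_mul_sin n x
    _ ≤ ∑ j ∈ range (n / 2), fejerKernel n (x - node n j) :=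
        sum_le_sum fun _ _ => sub_le_self _ (fejerKernel_nonneg _ _)
    _ ≤ ∑ j ∈ range n, fejerKernel n (x - node n j) :=
        sum_le_sum_of_subset_of_nonneg (range_subset_range.mpr (Nat.div_le_self n 2))
          fun _ _ _ => fejerKernel_nonneg _ _
    _ = 1 := sum_fejerKernel_sub_node hn x

lemma sineCoeff_nonneg {n k : ℕ} (hk : 0 < k) (hkn : k < n) : 0 ≤ sineCoeff n k := by
  have hα := sin_natCast_mul_pi_div_pos hk hkn
  have hsum : 0 ≤ ∑ j ∈ range (n / 2), sin (k * node n j) := by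
    have h := sin_mul_sum_sin_odd_mul (k * π / n) (n / 2)
    simp only [show ∀ j : ℕ, (2 * j + 1) * (k * π / n) = k * node n j from fun j => by
      unfold node; ring] at h
    exact nonneg_of_mul_nonneg_right (h ▸ sq_nonneg _) hα
  have hkn' : (k : ℝ) ≤ n := by exact_mod_cast hkn.le
  unfold sineCoeff
  exact mul_nonneg (div_nonneg (by linarith) (by positivity)) hsum

lemma sum_sub_mul_sin_eq_cot {n : ℕ} {θ : ℝ} (hθ : sin (n * θ) = 0) (hs : sin (θ / 2) ≠ 0) :
    ∑ k ∈ range n, (n - k : ℝ) * sin (k * θ) = n / 2 * cot (θ / 2) := by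
  have hsin : sin θ = 2 * sin (θ / 2) * cos (θ / 2) := by
    rw [← sin_two_mul, mul_div_cancel₀ θ two_ne_zero]
  have h := four_mul_sin_half_sq_mul_sum_sin n θ
  rw [hθ, sub_zero, hsin] at h
  have h' : 2 * sin (θ / 2) * (2 * sin (θ / 2) * ∑ k ∈ range n, (n - k : ℝ) * sin (k * θ))
      = 2 * sin (θ / 2) * (n * cos (θ / 2)) := by
    linear_combination h
  rw [cot_eq_cos_div_sin]
  field_simp
  linear_combination mul_left_cancel₀ (mul_ne_zero two_ne_zero hs) h'

lemma sum_sineCoeff {n : ℕ} (hn : 0 < n) :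
    ∑ k ∈ range n, sineCoeff n k = 2 / n * ∑ j ∈ range (n / 2), cot (node n j / 2) := by
  have hn' : (n : ℝ) ≠ 0 := by positivity
  simp only [sineCoeff, mul_sum]
  rw [sum_comm]
  refine sum_congr rfl fun j hj => ?_
  have hj : 2 * j + 1 < 2 * n := by have := mem_range.mp hj; omega
  have hθ : sin (n * node n j) = 0 := by
    rw [node, mul_div_cancel₀ _ hn']
    exact_mod_cast sin_nat_mul_pi (2 * j + 1)
  have hs : sin (node n j / 2) ≠ 0 := by
    rw [node_div_two]
    exact (sin_natCast_mul_pi_div_pos (Nat.succ_pos _) hj).ne'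
  rw [show 2 / (n : ℝ) * cot (node n j / 2) = 4 / n ^ 2 * (n / 2 * cot (node n j / 2)) by
      field_simp; ring, ← sum_sub_mul_sin_eq_cot hθ hs, mul_sum]
  exact sum_congr rfl fun k _ => by ring

lemma sum_Icc_one_eq_sum_range_succ {M : Type*} [AddCommMonoid M] {f : ℕ → M} (h₀ : f 0 = 0)
    (m : ℕ) : ∑ k ∈ Icc 1 m, f k = ∑ k ∈ range (m + 1), f k := by
  rw [sum_range_eq_add_Ico f (by positivity), h₀, zero_add, Ico_add_one_right_eq_Icc]

lemma sum_filter_odd_Icc {M : Type*} [AddCommMonoid M] (f : ℕ → M) (m : ℕ) :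
    ∑ j ∈ (Icc 1 m).filter Odd, f j = ∑ i ∈ range ((m + 1) / 2), f (2 * i + 1) := by
  have h : (Icc 1 m).filter Odd = (range ((m + 1) / 2)).image (fun i => 2 * i + 1) := by
    ext j
    simp only [mem_filter, mem_Icc, mem_image, mem_range]
    constructor
    · rintro ⟨⟨h₁, h₂⟩, i, rfl⟩
      exact ⟨i, by omega, rfl⟩
    · rintro ⟨i, hi, rfl⟩
      exact ⟨⟨by omega, by omega⟩, i, rfl⟩
  rw [h, sum_image fun i _ i' _ h => by simpa using h]

lemma exists_le_one_div_of_sum_mul_le_one {ι : Type*} {s : Finset ι} {w a : ι → ℝ}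
    (hw : ∀ i ∈ s, 0 ≤ w i) (hpos : 0 < ∑ i ∈ s, w i) (h : ∑ i ∈ s, w i * a i ≤ 1) :
    ∃ i ∈ s, a i ≤ 1 / ∑ i ∈ s, w i := by
  have hs : s.Nonempty := nonempty_of_sum_ne_zero hpos.ne'
  obtain ⟨i, hi, hmin⟩ := exists_min_image s a hs
  refine ⟨i, hi, (le_div_iff₀ hpos).mpr ?_⟩
  calc a i * ∑ i ∈ s, w i = ∑ j ∈ s, w j * a i := by rw [mul_sum]; simp only [mul_comm]
    _ ≤ ∑ j ∈ s, w j * a j :=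
        sum_le_sum fun j hj => mul_le_mul_of_nonneg_left (hmin j hj) (hw j hj)
    _ ≤ 1 := h

lemma integrable_sin_const_mul (μ : Measure ℝ) [IsFiniteMeasure μ] (a : ℝ) :
    Integrable (fun x => sin (a * x)) μ :=
  .of_bound (by fun_prop) 1 (.of_forall fun x => abs_sin_le_one _)

lemma sum_mul_integral_sin_le_one (μ : Measure ℝ) [IsProbabilityMeasure μ] (s : Finset ℕ)
    (w : ℕ → ℝ) (h : ∀ x, ∑ k ∈ s, w k * sin (k * x) ≤ 1) :
    ∑ k ∈ s, w k * ∫ x, sin (k * x) ∂μ ≤ 1 := by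
  simp only [← integral_const_mul]
  have hint : ∀ k ∈ s, Integrable (fun x => w k * sin (k * x)) μ := fun k _ =>
    (integrable_sin_const_mul μ k).const_mul _
  rw [← integral_finsetSum s hint]
  simpa using integral_mono (integrable_finsetSum s hint) (integrable_const 1) h

end SineMomentBound

open SineMomentBound

theorem stmt_15 (m : ℕ) (hm : 1 ≤ m)
    (c : ℝ)
    (hc : c = (2 / ((m : ℝ) + 1)) *
      ∑ j ∈ (Finset.Icc 1 m).filter (fun j => Odd j), Real.cot (π * j / (2 * m + 2)))
    (μ : Measure ℝ) [IsProbabilityMeasure μ] :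
    ∃ k : ℕ, 1 ≤ k ∧ k ≤ m ∧ (∫ x, Real.sin (k * x) ∂μ) ≤ 1 / c := by
  have hcot : c = 2 / ((m + 1 : ℕ) : ℝ) * ∑ j ∈ range ((m + 1) / 2), cot (node (m + 1) j / 2) := by
    rw [hc, sum_filter_odd_Icc]
    push_cast
    congr 2 with j
    congr 1
    unfold node
    push_cast
    field_simp
  have hcoeff : c = ∑ k ∈ Icc 1 m, sineCoeff (m + 1) k := by
    rw [hcot, sum_Icc_one_eq_sum_range_succ (by simp [sineCoeff]), sum_sineCoeff m.succ_pos]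
  have hpos : 0 < c := by
    rw [hcot]
    refine mul_pos (by positivity) (sum_pos (fun j hj => ?_) ⟨0, mem_range.mpr (by omega)⟩)
    exact cot_node_div_two_pos (by have := mem_range.mp hj; omega)
  have hw : ∀ k ∈ Icc 1 m, 0 ≤ sineCoeff (m + 1) k := fun k hk =>
    sineCoeff_nonneg (mem_Icc.mp hk).1 (Nat.lt_succ_of_le (mem_Icc.mp hk).2)
  have hbound : ∑ k ∈ Icc 1 m, sineCoeff (m + 1) k * ∫ x, sin (k * x) ∂μ ≤ 1 :=
    sum_mul_integral_sin_le_one μ _ _ fun x => by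
      rw [sum_Icc_one_eq_sum_range_succ (by simp)]
      exact sum_sineCoeff_mul_sin_le_one m.succ_pos x
  obtain ⟨k, hk, hle⟩ := exists_le_one_div_of_sum_mul_le_one hw (hcoeff ▸ hpos) hbound
  exact ⟨k, (mem_Icc.mp hk).1, (mem_Icc.mp hk).2, hcoeff ▸ hle⟩
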